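/- arXiv:math/0210033 — 5 statements merged into one kernel-verified Lean document; each statement's English description precedes it below -/
import Mathlib

section
/- A matrix M in SL(2,Z) is conjugate in SL(2,Z) to [[1,1],[0,1]] if and only if M = A_{(a,b)} = [[1-ab, a^2], [-b^2, 1+ab]] for some integers a, b with gcd(a,b)=1. -/
/-- The monodromy matrix `A_{(a,b)}`. -/
def Aab (a b : ℤ) : Matrix (Fin 2) (Fin 2) ℤ :=
  !![1 - a * b, a ^ 2; -b ^ 2, 1 + a * b]

/-- The standard positive Dehn twist matrix `[[1,1],[0,1]]` in `SL(2,ℤ)`. -/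
def Tmat : Matrix.SpecialLinearGroup (Fin 2) ℤ :=
  ⟨!![1, 1; 0, 1], by norm_num [Matrix.det_fin_two_of]⟩

/-!
Conjugating `[[1,1],[0,1]]` by `P ∈ SL(2,ℤ)` gives `A_{(a,c)}`, where `(a, c)` is the first
column of `P`. The first columns of matrices in `SL(2,ℤ)` are exactly the coprime pairs.
-/

open Matrix MatrixGroups

theorem Matrix.mul_unipotent_mul_adjugate_of_det_eq_one {R : Type*} [CommRing R]
    {P : Matrix (Fin 2) (Fin 2) R} (hP : P.det = 1) :
    P * !![1, 1; 0, 1] * adjugate P =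
      !![1 - P 0 0 * P 1 0, P 0 0 ^ 2; -P 1 0 ^ 2, 1 + P 0 0 * P 1 0] := by
  rw [det_fin_two] at hP
  rw [adjugate_fin_two, eta_fin_two P]
  simp only [mul_fin_two, mul_one, mul_zero, add_zero, of_apply, cons_val', cons_val_zero,
    cons_val_one, cons_val_fin_one, EmbeddingLike.apply_eq_iff_eq, vecCons_inj]
  refine ⟨⟨?_, ?_, trivial⟩, ⟨?_, ?_, trivial⟩, trivial⟩
  · linear_combination hP
  · ring
  · ring
  · linear_combination hP

theorem coe_mul_Tmat_mul_inv (P : SL(2, ℤ)) :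
    ((P * Tmat * P⁻¹ : SL(2, ℤ)) : Matrix (Fin 2) (Fin 2) ℤ) = Aab (P 0 0) (P 1 0) :=
  mul_unipotent_mul_adjugate_of_det_eq_one P.det_coe

theorem stmt2 (M : Matrix.SpecialLinearGroup (Fin 2) ℤ) :
    (∃ P : Matrix.SpecialLinearGroup (Fin 2) ℤ, M = P * Tmat * P⁻¹) ↔
      ∃ a b : ℤ, Int.gcd a b = 1 ∧ (M : Matrix (Fin 2) (Fin 2) ℤ) = Aab a b := by
  constructor
  · rintro ⟨P, rfl⟩
    exact ⟨P 0 0, P 1 0, Int.isCoprime_iff_gcd_eq_one.mp (P.isCoprime_col 0),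
      coe_mul_Tmat_mul_inv P⟩
  · rintro ⟨a, b, hab, hM⟩
    obtain ⟨P, rfl, rfl⟩ := (Int.isCoprime_iff_gcd_eq_one.mpr hab).exists_SL2_col 0
    exact ⟨P, Subtype.ext (hM.trans (coe_mul_Tmat_mul_inv P).symm)⟩
end

section
/- Let (a,b) and (a',b') be primitive integer vectors (gcd(a,b) = gcd(a',b') = 1) and let k, k' be positive integers. If A_{(a,b)}^k = A_{(a',b')}^{k'}, then k = k' and (a',b') = (a,b) or (a',b') = (-a,-b). -/
/-! `A_{(a,b)} = 1 + N` with `N ^ 2 = 0`, so `A_{(a,b)} ^ k = 1 + k N`. Comparing off-diagonal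
entries gives `k a² = k' a'²` and `k b² = k' b'²`; since `a²` and `b²` are coprime, `k' ∣ k` and
symmetrically `k ∣ k'`. Then `a² = a'²`, `b² = b'²`, `a b = a' b'`, which pins `(a', b')` down
to `±(a, b)`. -/

lemma Aab_pow (a b : ℤ) (k : ℕ) :
    Aab a b ^ k = !![1 - k * a * b, k * a ^ 2; -(k * b ^ 2), 1 + k * a * b] := by
  induction k with
  | zero => simp [Matrix.one_fin_two]
  | succ n ih =>
      rw [pow_succ, ih, Aab]
      ext i j
      fin_cases i <;> fin_cases j <;> simp [Matrix.mul_apply] <;> ring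

lemma IsCoprime.dvd_of_dvd_mul_of_dvd_mul {R : Type*} [CommRing R] {x y m n : R}
    (hxy : IsCoprime x y) (hx : n ∣ m * x) (hy : n ∣ m * y) : n ∣ m := by
  obtain ⟨u, v, huv⟩ := hxy
  have hm : m = u * (m * x) + v * (m * y) := by linear_combination -m * huv
  rw [hm]
  exact dvd_add (hx.mul_left u) (hy.mul_left v)

lemma eq_and_eq_or_eq_neg_and_eq_neg {R : Type*} [CommRing R] [NoZeroDivisors R]
    {a b a' b' : R} (ha : a' ^ 2 = a ^ 2) (hb : b' ^ 2 = b ^ 2) (hab : a' * b' = a * b) :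
    (a' = a ∧ b' = b) ∨ (a' = -a ∧ b' = -b) := by
  rcases sq_eq_sq_iff_eq_or_eq_neg.mp ha with rfl | rfl <;>
    rcases sq_eq_sq_iff_eq_or_eq_neg.mp hb with rfl | rfl
  · exact .inl ⟨rfl, rfl⟩
  · have : a' * (b + b) = 0 := by linear_combination -hab
    rcases mul_eq_zero.mp this with h | h
    · exact .inr ⟨by simp [h], rfl⟩
    · exact .inl ⟨rfl, by linear_combination -h⟩
  · have : a * (b' + b') = 0 := by linear_combination -hab
    rcases mul_eq_zero.mp this with h | h
    · exact .inl ⟨by simp [h], rfl⟩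
    · exact .inr ⟨rfl, by linear_combination h⟩
  · exact .inr ⟨rfl, rfl⟩

lemma eq_of_mul_sq_eq_mul_sq {k k' a b a' b' : ℤ} (hk : 0 ≤ k) (hk' : 0 ≤ k')
    (hab : IsCoprime a b) (hab' : IsCoprime a' b')
    (ha : k * a ^ 2 = k' * a' ^ 2) (hb : k * b ^ 2 = k' * b' ^ 2) : k = k' :=
  Int.dvd_antisymm hk hk'
    ((hab'.pow (m := 2) (n := 2)).dvd_of_dvd_mul_of_dvd_mul ⟨_, ha.symm⟩ ⟨_, hb.symm⟩)
    ((hab.pow (m := 2) (n := 2)).dvd_of_dvd_mul_of_dvd_mul ⟨_, ha⟩ ⟨_, hb⟩)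

theorem stmt3_general (a b a' b' : ℤ) (hab : Int.gcd a b = 1) (hab' : Int.gcd a' b' = 1)
    (k k' : ℕ) (hk : 0 < k)
    (h : Aab a b ^ k = Aab a' b' ^ k') :
    k = k' ∧ ((a' = a ∧ b' = b) ∨ (a' = -a ∧ b' = -b)) := by
  rw [Aab_pow, Aab_pow] at h
  have h01 : (k : ℤ) * a ^ 2 = k' * a' ^ 2 := by simpa using congr_fun₂ h 0 1
  have h10 : (k : ℤ) * b ^ 2 = k' * b' ^ 2 := by simpa using congr_fun₂ h 1 0
  have h00 : (k : ℤ) * a * b = k' * a' * b' := by simpa using congr_fun₂ h 0 0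
  have hkk : (k : ℤ) = k' := eq_of_mul_sq_eq_mul_sq (by positivity) (by positivity)
    (Int.isCoprime_iff_gcd_eq_one.mpr hab) (Int.isCoprime_iff_gcd_eq_one.mpr hab') h01 h10
  have hk0 : (k : ℤ) ≠ 0 := by positivity
  rw [← hkk] at h01 h10 h00
  refine ⟨by exact_mod_cast hkk, eq_and_eq_or_eq_neg_and_eq_neg ?_ ?_ ?_⟩
  · exact (mul_left_cancel₀ hk0 h01).symm
  · exact (mul_left_cancel₀ hk0 h10).symm
  · exact (mul_left_cancel₀ hk0 (by linear_combination h00)).symm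

theorem stmt3 (a b a' b' : ℤ) (hab : Int.gcd a b = 1) (hab' : Int.gcd a' b' = 1)
    (k k' : ℕ) (hk : 0 < k) (hk' : 0 < k')
    (h : Aab a b ^ k = Aab a' b' ^ k') :
    k = k' ∧ ((a' = a ∧ b' = b) ∨ (a' = -a ∧ b' = -b)) :=
  stmt3_general a b a' b' hab hab' k k' hk h
end

section
/- Let n ≥ 1 and let m, m' be integers with gcd(n,m) = 1. There exists a matrix A in GL(2,Z) with det A = -1 such that A(n,m) = (0,1) and A(0,1) = (n,m') if and only if m·m' ≡ 1 (mod n). -/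
/-!
The second row of `A` is forced: `A (0, 1) = (n, m')` gives `A₁₁ = m'`, and then the second
coordinate of `A (n, m) = (0, 1)` reads `A₁₀ n + m' m = 1`, i.e. `m m' ≡ 1 (mod n)`.
Conversely, if `m m' - 1 = n k` then `!![-m, n; -k, m']` does the job, its determinant being
`n k - m m' = -1`.
-/

open Matrix

variable {R : Type*} [CommRing R]

theorem Matrix.mulVec_vec2 (A : Matrix (Fin 2) (Fin 2) R) (x y : R) :
    A *ᵥ ![x, y] = ![A 0 0 * x + A 0 1 * y, A 1 0 * x + A 1 1 * y] := by
  ext i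
  fin_cases i <;> simp [mulVec, dotProduct, Fin.sum_univ_two]

theorem dvd_one_sub_mul_of_mulVec_eq {A : Matrix (Fin 2) (Fin 2) R} {a b c d e : R}
    (hab : A *ᵥ ![a, b] = ![c, 1]) (he : A *ᵥ ![0, 1] = ![d, e]) : a ∣ 1 - b * e := by
  have hrow : A 1 0 * a + A 1 1 * b = 1 := by
    simpa [mulVec_vec2] using congrFun hab 1
  have hcorner : A 1 1 = e := by
    simpa [mulVec_vec2] using congrFun he 1
  exact ⟨A 1 0, by rw [← hrow, hcorner]; ring⟩

theorem exists_det_eq_neg_one_mulVec_eq_of_dvd {a b e : R} (h : a ∣ 1 - b * e) :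
    ∃ A : Matrix (Fin 2) (Fin 2) R,
      A.det = -1 ∧ A *ᵥ ![a, b] = ![0, 1] ∧ A *ᵥ ![0, 1] = ![a, e] := by
  obtain ⟨k, hk⟩ := h
  refine ⟨!![-b, a; k, e], ?_, ?_, ?_⟩
  · rw [det_fin_two_of]
    linear_combination hk
  · simp only [mulVec_vec2, of_apply, cons_val', cons_val_zero, cons_val_one, empty_val',
      cons_val_fin_one]
    exact vec2_eq (by ring) (by linear_combination -hk)
  · rw [mulVec_vec2]; simp

theorem exists_det_eq_neg_one_mulVec_eq_iff_dvd {a b e : R} :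
    (∃ A : Matrix (Fin 2) (Fin 2) R,
      A.det = -1 ∧ A *ᵥ ![a, b] = ![0, 1] ∧ A *ᵥ ![0, 1] = ![a, e]) ↔ a ∣ 1 - b * e :=
  ⟨fun ⟨_, _, hab, he⟩ => dvd_one_sub_mul_of_mulVec_eq hab he,
    exists_det_eq_neg_one_mulVec_eq_of_dvd⟩

theorem stmt6_general (n m m' : ℤ) :
    (∃ A : Matrix (Fin 2) (Fin 2) ℤ,
        A.det = -1 ∧
        A.mulVec ![n, m] = ![0, 1] ∧
        A.mulVec ![0, 1] = ![n, m']) ↔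
      m * m' ≡ 1 [ZMOD n] :=
  exists_det_eq_neg_one_mulVec_eq_iff_dvd.trans Int.modEq_iff_dvd.symm

theorem stmt6 (n m m' : ℤ) (hn : 1 ≤ n) (hgcd : Int.gcd n m = 1) :
    (∃ A : Matrix (Fin 2) (Fin 2) ℤ,
        A.det = -1 ∧
        A.mulVec ![n, m] = ![0, 1] ∧
        A.mulVec ![0, 1] = ![n, m']) ↔
      m * m' ≡ 1 [ZMOD n] :=
  stmt6_general n m m'
end

section
/- Suppose M_1, M_2, ..., M_N are matrices in SL(2,Z), each conjugate in SL(2,Z) to [[1,1],[0,1]], and their product M_1 · M_2 · ... · M_N equals the identity matrix. Then N is divisible by 12. -/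
theorem orderOf_map_dvd_of_list_prod_eq_one {G A : Type*} [Monoid G] [CommMonoid A] (φ : G →* A)
    {t : G} {N : ℕ} {M : Fin N → G} (hM : ∀ i, IsConj t (M i)) (hprod : (List.ofFn M).prod = 1) :
    orderOf (φ t) ∣ N := by
  have hφM : ∀ i, φ (M i) = φ t := fun i => (isConj_iff_eq.mp (φ.map_isConj (hM i))).symm
  apply orderOf_dvd_of_pow_eq_one
  calc φ t ^ N = (List.ofFn (φ ∘ M)).prod := by simp [List.prod_ofFn, hφM]
    _ = φ (List.ofFn M).prod := by rw [map_list_prod, List.map_ofFn]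
    _ = 1 := by rw [hprod, map_one]

namespace Matrix.SpecialLinearGroup

variable {R S : Type*} [CommRing R] [CommRing S]

/-- For `A = [[a, b], [c, d]]` this is the exponent in
`η(A z)² = ζ₁₂ ^ etaChar A * (c z + d) * η(z)²` (Dedekind's eta function, `ζ₁₂ = exp (2πi / 12)`),
so it is additive modulo `12`. -/
def etaChar (A : SpecialLinearGroup (Fin 2) R) : R :=
  (A 0 0 + A 1 1 + 3) * A 1 0 + 6 * A 1 0 ^ 2 - (A 1 0 ^ 2 - 1) * ((A 0 1 + 3) * A 1 1 - 3)

theorem etaChar_map (f : R →+* S) (A : SpecialLinearGroup (Fin 2) R) :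
    etaChar (map f A) = f (etaChar A) := by
  simp [etaChar, map_ofNat]

theorem etaChar_mul_zmod_three (A B : SpecialLinearGroup (Fin 2) (ZMod 3)) :
    etaChar (A * B) = etaChar A + etaChar B := by
  revert A B
  decide

theorem etaChar_mul_zmod_four (A B : SpecialLinearGroup (Fin 2) (ZMod 4)) :
    etaChar (A * B) = etaChar A + etaChar B := by
  revert A B
  decide

theorem etaChar_mul_zmod_mul {m n : ℕ} (hmn : m.Coprime n)
    (hm : ∀ A B : SpecialLinearGroup (Fin 2) (ZMod m), etaChar (A * B) = etaChar A + etaChar B)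
    (hn : ∀ A B : SpecialLinearGroup (Fin 2) (ZMod n), etaChar (A * B) = etaChar A + etaChar B)
    (A B : SpecialLinearGroup (Fin 2) (ZMod (m * n))) :
    etaChar (A * B) = etaChar A + etaChar B := by
  have hmap : ∀ {k : ℕ} (f : ZMod (m * n) →+* ZMod k),
      (∀ A B : SpecialLinearGroup (Fin 2) (ZMod k), etaChar (A * B) = etaChar A + etaChar B) →
        f (etaChar (A * B)) = f (etaChar A + etaChar B) := by
    intro k f hk
    rw [map_add, ← etaChar_map, ← etaChar_map, ← etaChar_map, map_mul, hk]
  let e := (ZMod.chineseRemainder hmn).toRingHom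
  exact (ZMod.chineseRemainder hmn).injective <|
    Prod.ext (hmap ((RingHom.fst _ _).comp e) hm) (hmap ((RingHom.snd _ _).comp e) hn)

def etaCharHom : SpecialLinearGroup (Fin 2) (ZMod 12) →* Multiplicative (ZMod 12) where
  toFun A := .ofAdd (etaChar A)
  map_one' := by simp [etaChar]
  map_mul' := etaChar_mul_zmod_mul (m := 3) (n := 4) (by norm_num)
    etaChar_mul_zmod_three etaChar_mul_zmod_four

theorem orderOf_etaCharHom_map_Tmat :
    orderOf (etaCharHom (map (Int.castRingHom (ZMod 12)) Tmat)) = 12 := by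
  have hT : etaCharHom (map (Int.castRingHom (ZMod 12)) Tmat) = .ofAdd 1 := by decide
  rw [hT, orderOf_ofAdd_eq_addOrderOf, ZMod.addOrderOf_one]

end Matrix.SpecialLinearGroup

theorem stmt14 (N : ℕ) (M : Fin N → Matrix.SpecialLinearGroup (Fin 2) ℤ)
    (hconj : ∀ i, ∃ P : Matrix.SpecialLinearGroup (Fin 2) ℤ, M i = P * Tmat * P⁻¹)
    (hprod : (List.ofFn M).prod = 1) :
    12 ∣ N := by
  have hM : ∀ i, IsConj Tmat (M i) := fun i =>
    isConj_iff.mpr ((hconj i).imp fun _ hP => hP.symm)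
  rw [← Matrix.SpecialLinearGroup.orderOf_etaCharHom_map_Tmat]
  exact orderOf_map_dvd_of_list_prod_eq_one (Matrix.SpecialLinearGroup.etaCharHom.comp
    (Matrix.SpecialLinearGroup.map (Int.castRingHom (ZMod 12)))) hM hprod
end

section
/- Let u, v, u', v' be vectors in R^2 with u' ≠ 0 and v' ≠ 0, let k, k' be positive integers, and suppose A^k u = v where A = A_{(a,b)} = [[1-ab, a^2], [-b^2, 1+ab]] for a primitive integer vector (a,b). If u ≠ v, then the pair (u, v) uniquely determines a, b and k (up to replacing (a,b) by (-a,-b)); and if u = v, then u is parallel to (a,b) and k is not determined. -/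
lemma Aab_neg (a b : ℤ) : Aab (-a) (-b) = Aab a b := by
  simp [Aab]

lemma Aab_pow_mulVec {R : Type*} [CommRing R] (a b : ℤ) (k : ℕ) (u : Fin 2 → R) :
    ((Aab a b ^ k).map (Int.cast : ℤ → R)).mulVec u =
      u - ((k : R) * (b * u 0 - a * u 1)) • ![(a : R), b] := by
  rw [Aab_pow]
  ext i
  fin_cases i <;> simp [Matrix.mulVec, dotProduct, Fin.sum_univ_two] <;> ring

lemma IsCoprime.eq_or_eq_neg_of_mul_eq_mul {a b a' b' : ℤ} (h : IsCoprime a b)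
    (h' : IsCoprime a' b') (hcross : a * b' = a' * b) :
    (a' = a ∧ b' = b) ∨ (a' = -a ∧ b' = -b) := by
  obtain ⟨x, y, hxy⟩ := h
  set t := x * a' + y * b'
  have ha : a' = t * a := by linear_combination (-a') * hxy - y * hcross
  have hb : b' = t * b := by linear_combination (-b') * hxy + x * hcross
  have ht : IsUnit t := h'.isUnit_of_dvd' (ha ▸ dvd_mul_right t a) (hb ▸ dvd_mul_right t b)
  rcases Int.isUnit_iff.mp ht with ht | ht
  · left; simp [ha, hb, ht]
  · right; simp [ha, hb, ht]

lemma exists_eq_smul_of_cross_eq_zero {K : Type*} [Field K] {a b : K} (hab : a ≠ 0 ∨ b ≠ 0)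
    {u : Fin 2 → K} (h : b * u 0 - a * u 1 = 0) : ∃ c : K, u = c • ![a, b] := by
  rcases hab with ha | hb
  · refine ⟨u 0 / a, funext fun i => ?_⟩
    fin_cases i
    · simp [ha]
    · simp only [Fin.mk_one, Pi.smul_apply, Matrix.cons_val_one, Matrix.cons_val_zero, smul_eq_mul]
      field_simp
      linear_combination -h
  · refine ⟨u 1 / b, funext fun i => ?_⟩
    fin_cases i
    · simp only [Fin.zero_eta, Pi.smul_apply, Matrix.cons_val_zero, smul_eq_mul]
      field_simp
      linear_combination h
    · simp [hb]

section

variable {K : Type*} [Field K] [CharZero K]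

lemma mul_eq_mul_of_Aab_pow_mulVec_eq {a b a' b' : ℤ} {k k' : ℕ} {u : Fin 2 → K}
    (h : ((Aab a b ^ k).map (Int.cast : ℤ → K)).mulVec u =
      ((Aab a' b' ^ k').map (Int.cast : ℤ → K)).mulVec u)
    (hne : ((Aab a b ^ k).map (Int.cast : ℤ → K)).mulVec u ≠ u) :
    a * b' = a' * b := by
  rw [Aab_pow_mulVec, Aab_pow_mulVec] at h
  rw [Aab_pow_mulVec] at hne
  set c : K := k * (b * u 0 - a * u 1)
  have hc : c ≠ 0 := by
    rintro hc
    simp [hc] at hne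
  have h0 := congrFun h 0
  have h1 := congrFun h 1
  simp only [Pi.sub_apply, Pi.smul_apply, Matrix.cons_val_zero, Matrix.cons_val_one,
    smul_eq_mul] at h0 h1
  have : c * ((a : K) * b' - a' * b) = 0 := by linear_combination (-b') * h0 + a' * h1
  exact_mod_cast sub_eq_zero.mp ((mul_eq_zero.mp this).resolve_left hc)

lemma eq_of_Aab_pow_mulVec_eq {a b : ℤ} {k k' : ℕ} {u : Fin 2 → K}
    (h : ((Aab a b ^ k).map (Int.cast : ℤ → K)).mulVec u =
      ((Aab a b ^ k').map (Int.cast : ℤ → K)).mulVec u)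
    (hne : ((Aab a b ^ k).map (Int.cast : ℤ → K)).mulVec u ≠ u) :
    k = k' := by
  rw [Aab_pow_mulVec, Aab_pow_mulVec, sub_right_inj, mul_smul, mul_smul] at h
  rw [Aab_pow_mulVec, ne_eq, sub_eq_self, mul_smul] at hne
  exact_mod_cast smul_left_injective K (right_ne_zero_of_smul hne) h

lemma Aab_pow_mulVec_eq_self_iff {a b : ℤ} (hab : a ≠ 0 ∨ b ≠ 0) {k : ℕ} (hk : k ≠ 0)
    (u : Fin 2 → K) :
    ((Aab a b ^ k).map (Int.cast : ℤ → K)).mulVec u = u ↔ (b : K) * u 0 - a * u 1 = 0 := by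
  have hp : ![(a : K), b] ≠ 0 := by
    simpa [funext_iff, Fin.forall_fin_two, or_iff_not_and_not] using hab
  rw [Aab_pow_mulVec, sub_eq_self, smul_eq_zero, mul_eq_zero]
  simp [hk, hp]

end

theorem stmt19_general (a b : ℤ) (hab : Int.gcd a b = 1) (k : ℕ) (hk : 0 < k)
    (u v : Fin 2 → ℝ)
    (h : ((Aab a b ^ k).map (Int.cast : ℤ → ℝ)).mulVec u = v) :
    (u ≠ v →
      ∀ (a' b' : ℤ), Int.gcd a' b' = 1 → ∀ k' : ℕ, 0 < k' →
        ((Aab a' b' ^ k').map (Int.cast : ℤ → ℝ)).mulVec u = v →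
        k = k' ∧ ((a' = a ∧ b' = b) ∨ (a' = -a ∧ b' = -b))) ∧
    (u = v →
      (∃ c : ℝ, u = c • fun i => ((![a, b] : Fin 2 → ℤ) i : ℝ)) ∧
      ∀ k'' : ℕ, 0 < k'' → ((Aab a b ^ k'').map (Int.cast : ℤ → ℝ)).mulVec u = v) := by
  have hcop := Int.isCoprime_iff_gcd_eq_one.mpr hab
  have hp := hcop.ne_zero_or_ne_zero
  subst h
  refine ⟨fun hne a' b' hab' k' _ h' => ?_, fun hfix => ?_⟩
  · have hcross := mul_eq_mul_of_Aab_pow_mulVec_eq h'.symm (Ne.symm hne)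
    rcases hcop.eq_or_eq_neg_of_mul_eq_mul (Int.isCoprime_iff_gcd_eq_one.mpr hab') hcross with
      ⟨rfl, rfl⟩ | ⟨rfl, rfl⟩
    · exact ⟨eq_of_Aab_pow_mulVec_eq h'.symm (Ne.symm hne), Or.inl ⟨rfl, rfl⟩⟩
    · rw [Aab_neg] at h'
      exact ⟨eq_of_Aab_pow_mulVec_eq h'.symm (Ne.symm hne), Or.inr ⟨rfl, rfl⟩⟩
  · have hω := (Aab_pow_mulVec_eq_self_iff hp hk.ne' u).mp hfix.symm
    obtain ⟨c, hc⟩ := exists_eq_smul_of_cross_eq_zero (by exact_mod_cast hp) hω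
    refine ⟨⟨c, by rw [hc]; congr 1; ext i; fin_cases i <;> rfl⟩, fun k'' hk'' => ?_⟩
    rw [← hfix, Aab_pow_mulVec_eq_self_iff hp hk''.ne' u]
    exact hω

theorem stmt19 (a b : ℤ) (hab : Int.gcd a b = 1) (k : ℕ) (hk : 0 < k)
    (u v : Fin 2 → ℝ) (hu : u ≠ 0) (hv : v ≠ 0)
    (h : ((Aab a b ^ k).map (Int.cast : ℤ → ℝ)).mulVec u = v) :
    (u ≠ v →
      ∀ (a' b' : ℤ), Int.gcd a' b' = 1 → ∀ k' : ℕ, 0 < k' →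
        ((Aab a' b' ^ k').map (Int.cast : ℤ → ℝ)).mulVec u = v →
        k = k' ∧ ((a' = a ∧ b' = b) ∨ (a' = -a ∧ b' = -b))) ∧
    (u = v →
      (∃ c : ℝ, u = c • fun i => ((![a, b] : Fin 2 → ℤ) i : ℝ)) ∧
      ∀ k'' : ℕ, 0 < k'' → ((Aab a b ^ k'').map (Int.cast : ℤ → ℝ)).mulVec u = v) :=
  stmt19_general a b hab k hk u v h
end
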